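/- Every (ε,0)-differentially private PAC k-learner for parities PAR_d under the uniform distribution with α < 1/4 and β = 1/2 requires sample complexity n = Ω(kd/ε). Specifically, n ≥ (kd·ln 2 − ln 2)/ε. -/

import Mathlib

/-!
Two distinct parities disagree on exactly half of the cube, so an output that is `α`-close
(`α < 1/4`) to every target in the tuple determines that tuple: the `2^(dk)` sets of accurate
outputs are pairwise disjoint. By group privacy, changing all `n` rows of the sample changes the
probability of any event by a factor at most `e^(nε)`, so running the learner on one fixed
dataset lands in each of these sets with probability at least `e^(-nε)/2`. Summing over the
disjoint sets gives `2^(dk)/2 ≤ e^(nε)`.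
-/

open Function
open scoped ENNReal Matrix Finset

def parityFn {d : ℕ} (x : Fin d → ZMod 2) : (Fin d → ZMod 2) → ZMod 2 :=
  fun y => ∑ i, x i * y i

theorem AddMonoidHom.two_mul_card_filter_ne_zero {G : Type*} [AddGroup G] [Fintype G]
    (f : G →+ ZMod 2) (hf : f ≠ 0) :
    2 * #{g | f g ≠ 0} = Fintype.card G := by
  obtain ⟨a, ha⟩ := DFunLike.ne_iff.mp hf
  have hfa : f a = 1 := (by decide : ∀ t : ZMod 2, t ≠ 0 → t = 1) _ ha
  -- translation by `a` flips the value of `f`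
  have hswap : #{g | ¬f g ≠ 0} = #{g | f g ≠ 0} := by
    refine Finset.card_equiv (Equiv.addRight a) fun g => ?_
    simp only [Finset.mem_filter, Finset.mem_univ, true_and, Equiv.coe_addRight, map_add, hfa]
    exact (by decide : ∀ t : ZMod 2, ¬t ≠ 0 ↔ t + 1 ≠ 0) _
  rw [two_mul, ← Finset.card_univ,
    ← Finset.card_filter_add_card_filter_not (s := Finset.univ) (fun g => f g ≠ 0), hswap]

theorem parityFn_sub {d : ℕ} (x x' : Fin d → ZMod 2) :
    parityFn (x - x') = parityFn x - parityFn x' :=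
  funext fun y => sub_dotProduct x x' y

theorem two_mul_hammingNorm_parityFn {d : ℕ} {z : Fin d → ZMod 2} (hz : z ≠ 0) :
    2 * hammingNorm (parityFn z) = 2 ^ d := by
  let f : (Fin d → ZMod 2) →+ ZMod 2 :=
    { toFun := parityFn z, map_zero' := dotProduct_zero z, map_add' := dotProduct_add z }
  obtain ⟨i, hi⟩ := Function.ne_iff.mp hz
  have hf : f ≠ 0 := DFunLike.ne_iff.mpr ⟨Pi.single i 1, by
    change z ⬝ᵥ Pi.single i 1 ≠ 0
    rwa [dotProduct_single, mul_one]⟩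
  calc 2 * hammingNorm (parityFn z) = Fintype.card (Fin d → ZMod 2) :=
        f.two_mul_card_filter_ne_zero hf
    _ = 2 ^ d := by simp

theorem two_mul_hammingDist_parityFn {d : ℕ} {x x' : Fin d → ZMod 2} (h : x ≠ x') :
    2 * hammingDist (parityFn x) (parityFn x') = 2 ^ d := by
  rw [hammingDist_eq_hammingNorm, neg_add_eq_sub, ← parityFn_sub]
  exact two_mul_hammingNorm_parityFn (sub_ne_zero.mpr h.symm)

theorem eq_of_four_mul_hammingDist_parityFn_lt {d : ℕ} {h : (Fin d → ZMod 2) → ZMod 2}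
    {x x' : Fin d → ZMod 2} (hx : 4 * hammingDist h (parityFn x) < 2 ^ d)
    (hx' : 4 * hammingDist h (parityFn x') < 2 ^ d) : x = x' := by
  by_contra hne
  have := two_mul_hammingDist_parityFn hne
  have := hammingDist_triangle_left (parityFn x) (parityFn x') h
  omega

theorem PMF.toOuterMeasure_bind_le {α β : Type*} (p : PMF α) (f : α → PMF β) {s : Set β}
    {b : ℝ≥0∞} (hf : ∀ a, (f a).toOuterMeasure s ≤ b) : (p.bind f).toOuterMeasure s ≤ b :=
  calc (p.bind f).toOuterMeasure s = ∑' a, p a * (f a).toOuterMeasure s :=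
        PMF.toOuterMeasure_bind_apply p f s
    _ ≤ ∑' a, p a * b := ENNReal.tsum_le_tsum fun a => mul_le_mul_right (hf a) _
    _ = b := by rw [ENNReal.tsum_mul_right, p.tsum_coe, one_mul]

theorem PMF.sum_toOuterMeasure_le_one {α ι : Type*} [Fintype ι] (p : PMF α) {T : ι → Set α}
    (hT : Pairwise (Disjoint on T)) : ∑ i, p.toOuterMeasure (T i) ≤ 1 := by
  -- for the discrete σ-algebra every set is measurable, so `p.toMeasure` is additive on `T`
  let _ : MeasurableSpace α := ⊤
  simp_rw [← p.toMeasure_apply_eq_toOuterMeasure]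
  rw [← tsum_fintype (L := .unconditional _),
    ← MeasureTheory.measure_iUnion hT fun _ => MeasurableSpace.measurableSet_top]
  exact MeasureTheory.prob_le_one

section DifferentialPrivacy

variable {ι Ω R : Type*}

def IsDiffPrivate (ε : ℝ) (A : (ι → Ω) → PMF R) : Prop :=
  ∀ S S' : ι → Ω, (∃ i₀, ∀ i, i ≠ i₀ → S i = S' i) → ∀ T : Set R,
    (A S).toOuterMeasure T ≤ ENNReal.ofReal (Real.exp ε) * (A S').toOuterMeasure T

variable {ε : ℝ} {A : (ι → Ω) → PMF R}

theorem IsDiffPrivate.toOuterMeasure_le_pow_card [DecidableEq ι] (hA : IsDiffPrivate ε A)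
    (s : Finset ι) {S S' : ι → Ω} (hS : ∀ i ∉ s, S i = S' i) (T : Set R) :
    (A S).toOuterMeasure T ≤ ENNReal.ofReal (Real.exp ε) ^ #s * (A S').toOuterMeasure T := by
  induction s using Finset.induction_on generalizing S with
  | empty => simp [funext fun i => hS i (Finset.notMem_empty i)]
  | insert i s hi ih =>
    have hstep := hA S (Function.update S i (S' i))
      ⟨i, fun j hj => (Function.update_of_ne hj _ _).symm⟩ T
    have hrest := ih (S := Function.update S i (S' i)) fun j hj => by
      rcases eq_or_ne j i with rfl | hji
      · exact Function.update_self _ _ _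
      · rw [Function.update_of_ne hji]
        exact hS j (by simp [hji, hj])
    calc (A S).toOuterMeasure T
        ≤ ENNReal.ofReal (Real.exp ε) * (A (Function.update S i (S' i))).toOuterMeasure T := hstep
      _ ≤ ENNReal.ofReal (Real.exp ε) *
          (ENNReal.ofReal (Real.exp ε) ^ #s * (A S').toOuterMeasure T) := by gcongr
      _ = _ := by rw [Finset.card_insert_of_notMem hi, pow_succ]; ring

theorem IsDiffPrivate.toOuterMeasure_le [Fintype ι] (hA : IsDiffPrivate ε A) (S S' : ι → Ω)
    (T : Set R) : (A S).toOuterMeasure T ≤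
      ENNReal.ofReal (Real.exp ε) ^ Fintype.card ι * (A S').toOuterMeasure T := by
  classical
  exact hA.toOuterMeasure_le_pow_card Finset.univ (fun i hi => absurd (Finset.mem_univ i) hi) T

theorem IsDiffPrivate.card_mul_le_of_pairwise_disjoint [Fintype ι] [Nonempty Ω] {C D : Type*}
    [Fintype C] (hA : IsDiffPrivate ε A) (ν : PMF D) (S : C → D → ι → Ω) {T : C → Set R}
    (hT : Pairwise (Disjoint on T)) {p : ℝ≥0∞}
    (hp : ∀ c, p ≤ (ν.bind fun x => A (S c x)).toOuterMeasure (T c)) :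
    Fintype.card C * p ≤ ENNReal.ofReal (Real.exp ε) ^ Fintype.card ι := by
  set E := ENNReal.ofReal (Real.exp ε) ^ Fintype.card ι
  -- compare every learner run with the run on one fixed dataset
  set μ := A fun _ => Classical.arbitrary Ω
  calc Fintype.card C * p = ∑ c : C, p := by simp
    _ ≤ ∑ c, E * μ.toOuterMeasure (T c) := Finset.sum_le_sum fun c _ =>
        (hp c).trans (ν.toOuterMeasure_bind_le _ fun x => hA.toOuterMeasure_le _ _ _)
    _ = E * ∑ c, μ.toOuterMeasure (T c) := Finset.mul_sum _ _ _ |>.symm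
    _ ≤ E * 1 := by gcongr; exact μ.sum_toOuterMeasure_le_one hT
    _ = E := mul_one E

end DifferentialPrivacy

theorem pairwise_disjoint_setOf_hammingDist_parityFn_le {d k : ℕ} {α : ℝ} (hα : α < 1 / 4) :
    Pairwise (Disjoint on fun c : Fin k → Fin d → ZMod 2 =>
      {h : Fin k → (Fin d → ZMod 2) → ZMod 2 |
        ∀ j, (hammingDist (h j) (parityFn (c j)) : ℝ) / 2 ^ d ≤ α}) := by
  have hclose {h : (Fin d → ZMod 2) → ZMod 2} {x : Fin d → ZMod 2}
      (hx : (hammingDist h (parityFn x) : ℝ) / 2 ^ d ≤ α) :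
      4 * hammingDist h (parityFn x) < 2 ^ d := by
    rw [div_le_iff₀ (by positivity)] at hx
    have := mul_lt_mul_of_pos_right hα (pow_pos two_pos d : (0 : ℝ) < 2 ^ d)
    exact_mod_cast (by linarith : (4 * hammingDist h (parityFn x) : ℝ) < 2 ^ d)
  intro c c' hne
  refine Set.disjoint_left.mpr fun h hc hc' => hne (funext fun j => ?_)
  exact eq_of_four_mul_hammingDist_parityFn_lt (hclose (hc j)) (hclose (hc' j))

theorem log_two_mul_sub_log_two_div_le {m n : ℕ} {ε : ℝ} (hε : 0 < ε)
    (h : (2 : ℝ≥0∞) ^ m * (1 / 2) ≤ ENNReal.ofReal (Real.exp ε) ^ n) :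
    ((m : ℝ) * Real.log 2 - Real.log 2) / ε ≤ n := by
  have hreal : (2 : ℝ) ^ m / 2 ≤ Real.exp (n * ε) := by
    rw [← ENNReal.ofReal_le_ofReal_iff (Real.exp_pos _).le, Real.exp_nat_mul,
      ENNReal.ofReal_pow (Real.exp_pos _).le, ENNReal.ofReal_div_of_pos two_pos,
      ENNReal.ofReal_pow zero_le_two]
    simpa [div_eq_mul_inv] using h
  have hlog := Real.log_le_log (by positivity) hreal
  rw [Real.log_div (by positivity) two_ne_zero, Real.log_pow, Real.log_exp] at hlog
  rw [div_le_iff₀ hε]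
  linarith

theorem private_parity_multilearner_lower_bound_general
    (d k n : ℕ) (α ε : ℝ) (hα1 : α < 1 / 4) (hε : 0 < ε)
    (A : (Fin n → (Fin d → ZMod 2) × (Fin k → ZMod 2)) →
      PMF (Fin k → ((Fin d → ZMod 2) → ZMod 2)))
    -- (ε,0)-differential privacy with respect to changing one row:
    (hDP : ∀ S S' : Fin n → (Fin d → ZMod 2) × (Fin k → ZMod 2),
      (∃ i₀ : Fin n, ∀ i : Fin n, i ≠ i₀ → S i = S' i) →
      ∀ T : Set (Fin k → ((Fin d → ZMod 2) → ZMod 2)),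
        (A S).toOuterMeasure T ≤ ENNReal.ofReal (Real.exp ε) * (A S').toOuterMeasure T)
    -- utility: for every tuple of target parities, with probability at least
    -- `1 − β = 1/2` over a uniform i.i.d. sample and the learner's coins, every
    -- output hypothesis has error at most `α` under the uniform distribution:
    (hUtility : ∀ c : Fin k → (Fin d → ZMod 2),
      (1 : ENNReal) / 2 ≤
        ((PMF.uniformOfFintype (Fin n → (Fin d → ZMod 2))).bind
            (fun xs => A (fun i => (xs i, fun j => parityFn (c j) (xs i))))).toOuterMeasure
          {h : Fin k → ((Fin d → ZMod 2) → ZMod 2) |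
            ∀ j, ((Finset.univ.filter
                (fun y : Fin d → ZMod 2 => h j y ≠ parityFn (c j) y)).card : ℝ)
              / 2 ^ d ≤ α}) :
    ((k : ℝ) * d * Real.log 2 - Real.log 2) / ε ≤ (n : ℝ) := by
  have hA : IsDiffPrivate ε A := hDP
  have hpack := hA.card_mul_le_of_pairwise_disjoint _ _
    (pairwise_disjoint_setOf_hammingDist_parityFn_le hα1) hUtility
  have hcard : Fintype.card (Fin k → Fin d → ZMod 2) = 2 ^ (d * k) := by simp [pow_mul]
  rw [hcard, Fintype.card_fin, Nat.cast_pow, Nat.cast_ofNat] at hpack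
  have hbound := log_two_mul_sub_log_two_div_le hε hpack
  rwa [Nat.cast_mul, mul_comm (d : ℝ)] at hbound

/-- Packing lower bound for privately multi-learning parities: every
`(ε,0)`-differentially private PAC `k`-learner for `PAR_d` under the uniform
distribution with `α < 1/4` and `β = 1/2` requires sample complexity
`n ≥ (k·d·ln 2 − ln 2)/ε`. -/
theorem private_parity_multilearner_lower_bound
    (d k n : ℕ) (α ε : ℝ) (hα : 0 ≤ α) (hα1 : α < 1 / 4) (hε : 0 < ε)
    (A : (Fin n → (Fin d → ZMod 2) × (Fin k → ZMod 2)) →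
      PMF (Fin k → ((Fin d → ZMod 2) → ZMod 2)))
    -- (ε,0)-differential privacy with respect to changing one row:
    (hDP : ∀ S S' : Fin n → (Fin d → ZMod 2) × (Fin k → ZMod 2),
      (∃ i₀ : Fin n, ∀ i : Fin n, i ≠ i₀ → S i = S' i) →
      ∀ T : Set (Fin k → ((Fin d → ZMod 2) → ZMod 2)),
        (A S).toOuterMeasure T ≤ ENNReal.ofReal (Real.exp ε) * (A S').toOuterMeasure T)
    -- utility: for every tuple of target parities, with probability at least
    -- `1 − β = 1/2` over a uniform i.i.d. sample and the learner's coins, every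
    -- output hypothesis has error at most `α` under the uniform distribution:
    (hUtility : ∀ c : Fin k → (Fin d → ZMod 2),
      (1 : ENNReal) / 2 ≤
        ((PMF.uniformOfFintype (Fin n → (Fin d → ZMod 2))).bind
            (fun xs => A (fun i => (xs i, fun j => parityFn (c j) (xs i))))).toOuterMeasure
          {h : Fin k → ((Fin d → ZMod 2) → ZMod 2) |
            ∀ j, ((Finset.univ.filter
                (fun y : Fin d → ZMod 2 => h j y ≠ parityFn (c j) y)).card : ℝ)
              / 2 ^ d ≤ α}) :
    ((k : ℝ) * d * Real.log 2 - Real.log 2) / ε ≤ (n : ℝ) :=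
  private_parity_multilearner_lower_bound_general d k n α ε hα1 hε A hDP hUtility
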